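/- arXiv:2505.24699 — 4 statements merged into one kernel-verified Lean document; each statement's English description precedes it below -/
import Mathlib

section
/- Let n, k, b be positive integers such that n − (b−1)·k(k+1)/2 > 0. Let A = (a_1,…,a_n) be a sequence of nonzero vectors in a vector space V of dimension k (over an arbitrary field). Then there exist a linear subspace V' ⊆ V and a subsequence A' of A of size at least n − (b−1)·k(k+1)/2 such that every element of A' lies in V' and the basis packing number of A', regarded as a sequence of vectors in V', is at least b. -/
/-- The basis packing number of `a` is at least `b`: there exist `b` pairwise
disjoint index sets, each of which indexes a basis of `V`. -/
def HasBasisPacking (𝔽 : Type*) {V ι : Type*} [Field 𝔽] [AddCommGroup V] [Module 𝔽 V]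
    (a : ι → V) (b : ℕ) : Prop :=
  ∃ I : Fin b → Set ι, (Pairwise fun j j' => Disjoint (I j) (I j')) ∧
    ∀ j, LinearIndependent 𝔽 (fun i : I j => a i) ∧ Submodule.span 𝔽 (a '' I j) = ⊤

section Aux
variable {𝔽 V : Type*} [Field 𝔽] [AddCommGroup V] [Module 𝔽 V]

/-- From a spanning finset of indices, extract a subfinset indexing an
independent spanning family. -/
lemma extract_basis_aux [FiniteDimensional 𝔽 V] {n : ℕ} (a : Fin n → V) (S : Finset (Fin n))
    (W : Submodule 𝔽 V) (hspan : Submodule.span 𝔽 (a '' S) = W) :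
    ∃ T : Finset (Fin n), T ⊆ S ∧ T.card ≤ Module.finrank 𝔽 W ∧
      LinearIndependent 𝔽 (fun i : (T : Set (Fin n)) => a i) ∧
      Submodule.span 𝔽 (a '' T) = W := by
  classical
  obtain ⟨t, hts, htspan, htli⟩ := exists_linearIndependent 𝔽 (a '' (S : Set (Fin n)))
  have htfin : t.Finite := (S.finite_toSet.image a).subset hts
  have hch : ∀ v ∈ htfin.toFinset, ∃ i, i ∈ S ∧ a i = v := by
    intro v hv
    obtain ⟨i, hi, rfl⟩ := hts (htfin.mem_toFinset.1 hv)
    exact ⟨i, hi, rfl⟩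
  set T : Finset (Fin n) := htfin.toFinset.attach.image
      (fun v => (hch v.1 v.2).choose) with hT
  have hTspec : ∀ i ∈ T, ∃ v : {x // x ∈ htfin.toFinset}, i = (hch v.1 v.2).choose := by
    intro i hi
    rw [hT, Finset.mem_image] at hi
    obtain ⟨v, _, rfl⟩ := hi
    exact ⟨v, rfl⟩
  have hTS : T ⊆ S := by
    intro i hi
    obtain ⟨v, rfl⟩ := hTspec i hi
    exact (hch v.1 v.2).choose_spec.1
  have haT : ∀ i ∈ T, a i ∈ t := by
    intro i hi
    obtain ⟨v, rfl⟩ := hTspec i hi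
    rw [(hch v.1 v.2).choose_spec.2]
    exact htfin.mem_toFinset.1 v.2
  have hinj : ∀ i ∈ T, ∀ j ∈ T, a i = a j → i = j := by
    intro i hi j hj hij
    obtain ⟨v, rfl⟩ := hTspec i hi
    obtain ⟨w, rfl⟩ := hTspec j hj
    have hv := (hch v.1 v.2).choose_spec.2
    have hw := (hch w.1 w.2).choose_spec.2
    have : v = w := Subtype.ext (by rw [← hv, ← hw, hij])
    rw [this]
  have himg : a '' (T : Set (Fin n)) = t := by
    ext v
    constructor
    · rintro ⟨i, hi, rfl⟩
      exact haT i hi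
    · intro hv
      have hv' : v ∈ htfin.toFinset := htfin.mem_toFinset.2 hv
      refine ⟨(hch v hv').choose, ?_, (hch v hv').choose_spec.2⟩
      rw [hT]
      exact Finset.mem_image.2 ⟨⟨v, hv'⟩, Finset.mem_attach _ _, rfl⟩
  have hli : LinearIndependent 𝔽 (fun i : (T : Set (Fin n)) => a i) := by
    have hg : Function.Injective (fun i : (T : Set (Fin n)) =>
        (⟨a i.1, haT i.1 i.2⟩ : t)) := by
      intro x y h
      exact Subtype.ext (hinj x.1 x.2 y.1 y.2 (congrArg Subtype.val h))
    exact htli.comp (fun i : (T : Set (Fin n)) => (⟨a i.1, haT i.1 i.2⟩ : t)) hg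
  have hspanT : Submodule.span 𝔽 (a '' (T : Set (Fin n))) = W := by
    rw [himg, htspan, hspan]
  refine ⟨T, hTS, ?_, hli, hspanT⟩
  -- cardinality bound
  have hmemW : ∀ i ∈ T, a i ∈ W := by
    intro i hi
    rw [← hspanT]
    exact Submodule.subset_span ⟨i, hi, rfl⟩
  have hliW : LinearIndependent 𝔽 (fun i : (T : Set (Fin n)) =>
      (⟨a i.1, hmemW i.1 i.2⟩ : W)) := by
    apply LinearIndependent.of_comp W.subtype
    exact hli
  have := hliW.fintype_card_le_finrank
  simpa using this

/-- Greedy extraction of `m` disjoint bases of `W`, or a subset whose span is not `W`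
with controlled loss. -/
lemma greedy_aux [FiniteDimensional 𝔽 V] {n : ℕ} (a : Fin n → V) (W : Submodule 𝔽 V) :
    ∀ (m : ℕ) (S : Finset (Fin n)),
    (∃ T : Fin m → Finset (Fin n), (∀ j, T j ⊆ S) ∧
      (Pairwise fun j j' => Disjoint (T j) (T j')) ∧
      ∀ j, LinearIndependent 𝔽 (fun i : (T j : Set (Fin n)) => a i) ∧
        Submodule.span 𝔽 (a '' T j) = W)
    ∨ (∃ S' : Finset (Fin n), S' ⊆ S ∧ Submodule.span 𝔽 (a '' S') ≠ W ∧
        S.card ≤ S'.card + (m - 1) * Module.finrank 𝔽 W) := by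
  intro m
  induction m with
  | zero =>
    intro S
    exact Or.inl ⟨Fin.elim0, fun j => j.elim0, fun j => j.elim0, fun j => j.elim0⟩
  | succ m ih =>
    intro S
    by_cases hW : Submodule.span 𝔽 (a '' S) = W
    · obtain ⟨T0, hT0S, hT0card, hT0li, hT0span⟩ := extract_basis_aux a S W hW
      rcases ih (S \ T0) with ⟨T, hTs, hTdisj, hTprop⟩ | ⟨S', hS', hS'span, hS'card⟩
      · left
        refine ⟨Fin.cons T0 T, ?_, ?_, ?_⟩
        · intro j
          induction j using Fin.cases with
          | zero => simpa using hT0S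
          | succ j => simpa using (hTs j).trans (Finset.sdiff_subset)
        · intro j j' hne
          induction j using Fin.cases with
          | zero =>
            induction j' using Fin.cases with
            | zero => exact absurd rfl hne
            | succ j' =>
              simp only [Fin.cons_zero, Fin.cons_succ]
              exact Finset.disjoint_sdiff.mono_right (hTs j')
          | succ j =>
            induction j' using Fin.cases with
            | zero =>
              simp only [Fin.cons_zero, Fin.cons_succ]
              exact (Finset.disjoint_sdiff.mono_right (hTs j)).symm
            | succ j' =>
              simp only [Fin.cons_succ]
              exact hTdisj (fun e => hne (by rw [e]))
        · intro j
          induction j using Fin.cases with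
          | zero => simpa using ⟨hT0li, hT0span⟩
          | succ j => exact hTprop j
      · -- failure inside the recursion
        match m, ih, hS'card with
        | 0, _, _ =>
          -- with one basis demanded, `T0` alone suffices
          left
          refine ⟨fun _ => T0, fun _ => hT0S, fun j j' hne => absurd (Fin.ext (by omega)) hne, fun _ => ⟨hT0li, hT0span⟩⟩
        | (m + 1), _, hS'card =>
          right
          refine ⟨S', hS'.trans Finset.sdiff_subset, hS'span, ?_⟩
          have h1 : S.card ≤ (S \ T0).card + T0.card := by
            have := Finset.card_sdiff_of_subset hT0S
            have h2 := Finset.card_le_card hT0S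
            omega
          have h3 : (m + 1 - 1) * Module.finrank 𝔽 W + Module.finrank 𝔽 W
              = (m + 1 + 1 - 1) * Module.finrank 𝔽 W := by
            simp [Nat.succ_sub_one]; ring
          omega
    · exact Or.inr ⟨S, subset_rfl, hW, Nat.le_add_right _ _⟩

lemma main_aux [FiniteDimensional 𝔽 V] {n : ℕ} (b : ℕ) (a : Fin n → V) :
    ∀ (r : ℕ) (S : Finset (Fin n)),
      Module.finrank 𝔽 (Submodule.span 𝔽 (a '' S)) ≤ r →
    ∃ (V' : Submodule 𝔽 V) (I : Finset (Fin n)) (_ : I ⊆ S)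
        (hmem : ∀ i ∈ I, a i ∈ V'),
      2 * S.card ≤ 2 * I.card + (b - 1) * r * (r + 1) ∧
      HasBasisPacking 𝔽 (fun i : {i // i ∈ I} => (⟨a i.1, hmem i.1 i.2⟩ : V')) b := by
  intro r
  induction r with
  | zero =>
    intro S hr
    rcases greedy_aux a (Submodule.span 𝔽 (a '' S)) b S with
      ⟨T, hTs, hTdisj, hTprop⟩ | ⟨S', hS', hS'span, _⟩
    · -- success case
      refine ⟨Submodule.span 𝔽 (a '' S), S, subset_rfl,
        fun i hi => Submodule.subset_span ⟨i, hi, rfl⟩, by omega, ?_⟩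
      refine ⟨fun j => {x : {i // i ∈ S} | x.1 ∈ T j}, ?_, ?_⟩
      · intro j j' hne
        rw [Set.disjoint_left]
        intro x hx hx'
        exact Finset.disjoint_left.1 (hTdisj hne) hx hx'
      · intro j
        constructor
        · apply LinearIndependent.of_comp (Submodule.span 𝔽 (a '' S)).subtype
          have hg : Function.Injective
              (fun x : {x : {i // i ∈ S} | x.1 ∈ T j} =>
                (⟨x.1.1, x.2⟩ : (T j : Set (Fin n)))) := by
            intro x y h
            have h1 : x.1.1 = y.1.1 := by have := congrArg Subtype.val h; exact this
            exact Subtype.ext (Subtype.ext h1)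
          exact (hTprop j).1.comp _ hg
        · apply Submodule.map_injective_of_injective
            (Submodule.injective_subtype (Submodule.span 𝔽 (a '' S)))
          rw [Submodule.map_span, Submodule.map_top, Submodule.range_subtype]
          have himg : (Submodule.span 𝔽 (a '' S)).subtype ''
              ((fun i : {i // i ∈ S} =>
                (⟨a i.1, Submodule.subset_span ⟨i.1, i.2, rfl⟩⟩ :
                  Submodule.span 𝔽 (a '' S))) '' {x : {i // i ∈ S} | x.1 ∈ T j})
              = a '' (T j : Set (Fin n)) := by
            ext v
            constructor
            · rintro ⟨w, ⟨x, hx, rfl⟩, rfl⟩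
              exact ⟨x.1, hx, rfl⟩
            · rintro ⟨i, hi, rfl⟩
              exact ⟨_, ⟨(⟨i, hTs j hi⟩ : {i // i ∈ S}), hi, rfl⟩, rfl⟩
          rw [himg]
          exact (hTprop j).2
    · -- failure impossible at rank 0
      exfalso
      have hlt : Submodule.span 𝔽 (a '' S') < Submodule.span 𝔽 (a '' S) :=
        lt_of_le_of_ne (Submodule.span_mono (Set.image_mono (f := a) hS')) hS'span
      have := Submodule.finrank_lt_finrank_of_lt hlt
      omega
  | succ r ih =>
    intro S hr
    rcases greedy_aux a (Submodule.span 𝔽 (a '' S)) b S with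
      ⟨T, hTs, hTdisj, hTprop⟩ | ⟨S', hS', hS'span, hS'card⟩
    · refine ⟨Submodule.span 𝔽 (a '' S), S, subset_rfl,
        fun i hi => Submodule.subset_span ⟨i, hi, rfl⟩, by omega, ?_⟩
      refine ⟨fun j => {x : {i // i ∈ S} | x.1 ∈ T j}, ?_, ?_⟩
      · intro j j' hne
        rw [Set.disjoint_left]
        intro x hx hx'
        exact Finset.disjoint_left.1 (hTdisj hne) hx hx'
      · intro j
        constructor
        · apply LinearIndependent.of_comp (Submodule.span 𝔽 (a '' S)).subtype
          have hg : Function.Injective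
              (fun x : {x : {i // i ∈ S} | x.1 ∈ T j} =>
                (⟨x.1.1, x.2⟩ : (T j : Set (Fin n)))) := by
            intro x y h
            have h1 : x.1.1 = y.1.1 := by have := congrArg Subtype.val h; exact this
            exact Subtype.ext (Subtype.ext h1)
          exact (hTprop j).1.comp _ hg
        · apply Submodule.map_injective_of_injective
            (Submodule.injective_subtype (Submodule.span 𝔽 (a '' S)))
          rw [Submodule.map_span, Submodule.map_top, Submodule.range_subtype]
          have himg : (Submodule.span 𝔽 (a '' S)).subtype ''
              ((fun i : {i // i ∈ S} =>
                (⟨a i.1, Submodule.subset_span ⟨i.1, i.2, rfl⟩⟩ :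
                  Submodule.span 𝔽 (a '' S))) '' {x : {i // i ∈ S} | x.1 ∈ T j})
              = a '' (T j : Set (Fin n)) := by
            ext v
            constructor
            · rintro ⟨w, ⟨x, hx, rfl⟩, rfl⟩
              exact ⟨x.1, hx, rfl⟩
            · rintro ⟨i, hi, rfl⟩
              exact ⟨_, ⟨(⟨i, hTs j hi⟩ : {i // i ∈ S}), hi, rfl⟩, rfl⟩
          rw [himg]
          exact (hTprop j).2
    · -- failure: drop to a subspace
      have hlt : Submodule.span 𝔽 (a '' S') < Submodule.span 𝔽 (a '' S) :=
        lt_of_le_of_ne (Submodule.span_mono (Set.image_mono (f := a) hS')) hS'span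
      have hfr := Submodule.finrank_lt_finrank_of_lt hlt
      obtain ⟨V', I, hIS', hmem, hcard, hpack⟩ := ih S' (by omega)
      refine ⟨V', I, hIS'.trans hS', hmem, ?_, hpack⟩
      have hfrW : Module.finrank 𝔽 (Submodule.span 𝔽 (a '' S)) ≤ r + 1 := hr
      nlinarith [hS'card, hcard, hfrW]

end Aux

/-- Lemma `dropping-to-subspace`.
Let `n, k, b` be positive integers with `n - (b-1)·k(k+1)/2 > 0` and let
`A = (a₁,…,a_n)` be a sequence of nonzero vectors in a `k`-dimensional vector space
`V`. Then there are a subspace `V' ⊆ V` and a subsequence `A'` of size at least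
`n - (b-1)·k(k+1)/2` whose elements lie in `V'` and whose basis packing number, as a
sequence in `V'`, is at least `b`. -/
theorem statement12 (𝔽 : Type*) [Field 𝔽] (V : Type*) [AddCommGroup V] [Module 𝔽 V]
    [FiniteDimensional 𝔽 V]
    (n k b : ℕ) (hn : 0 < n) (hk : 0 < k) (hb : 0 < b)
    (hdim : Module.finrank 𝔽 V = k)
    (hsize : 0 < (n : ℝ) - ((b : ℝ) - 1) * k * (k + 1) / 2)
    (a : Fin n → V) (ha : ∀ i, a i ≠ 0) :
    ∃ (V' : Submodule 𝔽 V) (I : Finset (Fin n)) (hmem : ∀ i ∈ I, a i ∈ V'),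
      (n : ℝ) - ((b : ℝ) - 1) * k * (k + 1) / 2 ≤ I.card ∧
      HasBasisPacking 𝔽 (fun i : {i // i ∈ I} => (⟨a i.1, hmem i.1 i.2⟩ : V')) b := by
  have hr : Module.finrank 𝔽 (Submodule.span 𝔽 (a '' (Finset.univ : Finset (Fin n)))) ≤ k := by
    rw [← hdim]
    exact Submodule.finrank_le _
  obtain ⟨V', I, hIS, hmem, hcard, hpack⟩ := main_aux b a k Finset.univ hr
  refine ⟨V', I, hmem, ?_, hpack⟩
  have hcard' : 2 * n ≤ 2 * I.card + (b - 1) * k * (k + 1) := by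
    simpa using hcard
  have hcast : ((b - 1 : ℕ) : ℝ) = (b : ℝ) - 1 := by
    have h1 : (1 : ℕ) ≤ b := hb
    push_cast [Nat.cast_sub h1]
    ring
  have hR : (2 * n : ℝ) ≤ 2 * I.card + ((b : ℝ) - 1) * k * (k + 1) := by
    rw [← hcast]
    exact_mod_cast hcard'
  linarith
end

section
/- Let 𝔽 be a subfield of ℂ, let k ≤ r be positive integers, and let ψ: 𝔽^r → 𝔽^k be a surjective affine-linear map. Then for every set S ⊆ 𝔽^k and every real B ≥ 0, the integer point density functions satisfy d_{ψ^{−1}(S)}(B) = d_S(B). -/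
/-- `N_S(B)`: the number of integer points of `S` with all coordinates of
absolute value at most `B`. -/
noncomputable def latCount {K : Type*} [Field K] {k : ℕ} (S : Set (Fin k → K)) (B : ℝ) : ℕ :=
  Nat.card {x : Fin k → ℤ | (fun i => ((x i : ℤ) : K)) ∈ S ∧ ∀ i, |(x i : ℝ)| ≤ B}

/-- `d_S(B) = sup_φ N_{φ(S)}(B) / (2⌊B⌋+1)^k`, supremum over bijective
affine-linear maps `φ`. -/
noncomputable def latDensity {K : Type*} [Field K] {k : ℕ} (S : Set (Fin k → K)) (B : ℝ) : ℝ :=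
  ⨆ φ : (Fin k → K) ≃ᵃ[K] (Fin k → K),
    (latCount (φ '' S) B : ℝ) / ((2 * ⌊B⌋ + 1 : ℤ) : ℝ) ^ k

open Finset

namespace St13

open Classical in
/-- gluing along an injection -/
noncomputable def glue {k r : ℕ} (e : Fin k → Fin r) {α : Type*} (y : Fin k → α)
    (t : {i : Fin r // i ∉ Set.range e} → α) : Fin r → α :=
  fun i => if h : ∃ j, e j = i then y h.choose else t ⟨i, fun hj => h hj⟩

variable {k r : ℕ} {e : Fin k → Fin r} {α β : Type*}

theorem glue_apply_e (he : Function.Injective e) (y : Fin k → α)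
    (t : {i : Fin r // i ∉ Set.range e} → α) (j : Fin k) : glue e y t (e j) = y j := by
  have h : ∃ j', e j' = e j := ⟨j, rfl⟩
  simp only [glue, dif_pos h]
  exact congrArg y (he h.choose_spec)

theorem glue_apply_not (y : Fin k → α) (t : {i : Fin r // i ∉ Set.range e} → α)
    (i : Fin r) (hi : i ∉ Set.range e) : glue e y t i = t ⟨i, hi⟩ := by
  exact dif_neg hi

theorem glue_restrict (he : Function.Injective e) (x : Fin r → α) :
    glue e (x ∘ e) (fun p => x p.1) = x := by
  funext i
  by_cases hi : i ∈ Set.range e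
  · obtain ⟨j, rfl⟩ := hi
    rw [glue_apply_e he]; rfl
  · rw [glue_apply_not _ _ _ hi]

theorem comp_glue (he : Function.Injective e) (f : α → β) (y : Fin k → α) (t : {i : Fin r // i ∉ Set.range e} → α) :
    f ∘ glue e y t = glue e (f ∘ y) (f ∘ t) := by
  funext i
  by_cases hi : i ∈ Set.range e
  · obtain ⟨j, rfl⟩ := hi
    simp only [Function.comp_apply, glue_apply_e he]
  · simp only [Function.comp_apply, glue_apply_not _ _ _ hi]


attribute [local instance] Classical.propDecidable

noncomputable instance {k r : ℕ} (e : Fin k → Fin r) : Fintype {i : Fin r // i ∉ Set.range e} :=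
  Fintype.ofFinite _

/-- the box of integer vectors with coordinates in `[-M, M]` -/
noncomputable def box (ι : Type*) [Fintype ι] (M : ℤ) : Finset (ι → ℤ) :=
  Fintype.piFinset fun _ => Finset.Icc (-M) M

theorem mem_box {ι : Type*} [Fintype ι] {M : ℤ} {x : ι → ℤ} :
    x ∈ box ι M ↔ ∀ i, x i ∈ Finset.Icc (-M) M := Fintype.mem_piFinset

theorem card_box {ι : Type*} [Fintype ι] {M : ℤ} :
    (box ι M).card = (2 * M + 1).toNat ^ (Fintype.card ι) := by
  simp only [box, Fintype.card_piFinset, Int.card_Icc]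
  rw [Finset.prod_const, Finset.card_univ]
  congr 1
  omega

theorem mem_Icc_floor_iff {B : ℝ} {n : ℤ} :
    |(n : ℝ)| ≤ B ↔ n ∈ Finset.Icc (-⌊B⌋) ⌊B⌋ := by
  rw [Finset.mem_Icc, abs_le]
  constructor
  · rintro ⟨h1, h2⟩
    refine ⟨?_, Int.le_floor.2 h2⟩
    have : ((-n : ℤ) : ℝ) ≤ B := by push_cast; linarith
    have := Int.le_floor.2 this
    omega
  · rintro ⟨h1, h2⟩
    have hf : ((⌊B⌋ : ℤ) : ℝ) ≤ B := Int.floor_le B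
    constructor
    · have : ((-⌊B⌋ : ℤ) : ℝ) ≤ (n : ℝ) := by exact_mod_cast Int.cast_le.2 h1
      push_cast at this ⊢
      linarith
    · calc (n : ℝ) ≤ (⌊B⌋ : ℝ) := by exact_mod_cast h2
        _ ≤ B := hf

theorem latCount_eq {K : Type*} [Field K] {k : ℕ} (S : Set (Fin k → K)) (B : ℝ) :
    latCount S B
      = ((box (Fin k) ⌊B⌋).filter (fun x => (fun i => ((x i : ℤ) : K)) ∈ S)).card := by
  rw [latCount]
  have hset : {x : Fin k → ℤ | (fun i => ((x i : ℤ) : K)) ∈ S ∧ ∀ i, |(x i : ℝ)| ≤ B}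
      = ↑((box (Fin k) ⌊B⌋).filter (fun x => (fun i => ((x i : ℤ) : K)) ∈ S)) := by
    ext x
    simp only [Set.mem_setOf_eq, Finset.coe_filter, mem_box, mem_Icc_floor_iff]
    tauto
  rw [hset]
  simp only [Finset.coe_sort_coe]
  exact Nat.card_eq_finsetCard _

theorem latCount_le {K : Type*} [Field K] {k : ℕ} (S : Set (Fin k → K)) (B : ℝ) :
    latCount S B ≤ (2 * ⌊B⌋ + 1).toNat ^ k := by
  rw [latCount_eq]
  calc _ ≤ (box (Fin k) ⌊B⌋).card := Finset.card_filter_le _ _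
    _ = _ := by rw [card_box, Fintype.card_fin]


section Linear

variable {K : Type*} [Field K] {k r : ℕ} {e : Fin k → Fin r}

/-- extension by zero as a linear map -/
noncomputable def Emap (he : Function.Injective e) : (Fin k → K) →ₗ[K] (Fin r → K) where
  toFun z := glue e z (fun _ => 0)
  map_add' z w := by
    funext i
    by_cases hi : i ∈ Set.range e
    · obtain ⟨j, rfl⟩ := hi
      simp [glue_apply_e he]
    · simp [glue_apply_not _ _ _ hi]
  map_smul' c z := by
    funext i
    by_cases hi : i ∈ Set.range e
    · obtain ⟨j, rfl⟩ := hi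
      simp [glue_apply_e he]
    · simp [glue_apply_not _ _ _ hi]

theorem Emap_single (he : Function.Injective e) (j : Fin k) (a : K) :
    Emap he (Pi.single j a) = Pi.single (e j) a := by
  funext i
  by_cases hi : i ∈ Set.range e
  · obtain ⟨j', rfl⟩ := hi
    show glue e (Pi.single j a) (fun _ => 0) (e j') = _
    rw [glue_apply_e he]
    simp [Pi.single_apply, he.eq_iff]
  · show glue e (Pi.single j a) (fun _ => 0) i = _
    rw [glue_apply_not _ _ _ hi]
    have : i ≠ e j := fun h => hi ⟨j, h.symm⟩
    simp [Pi.single_apply, this]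

theorem single_eq_smul (i : Fin r) (a : K) : Pi.single i a = a • (Pi.single i (1 : K) : Fin r → K) := by
  funext j
  simp only [Pi.single_apply, Pi.smul_apply, smul_eq_mul]
  split <;> simp

theorem Emap_eq_sum (he : Function.Injective e) (z : Fin k → K) :
    Emap he z = ∑ j, z j • (Pi.single (e j) (1 : K) : Fin r → K) := by
  conv_lhs => rw [← Finset.univ_sum_single z]
  rw [map_sum]
  refine Finset.sum_congr rfl fun j _ => ?_
  rw [Emap_single he, single_eq_smul]

theorem exists_good (A : (Fin r → K) →ₗ[K] (Fin k → K)) (hA : Function.Surjective A) :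
    ∃ (e : Fin k → Fin r) (he : Function.Injective e),
      Function.Bijective (A ∘ₗ Emap he) := by
  set v : Fin r → (Fin k → K) := fun i => A (Pi.single i 1) with hv
  have hspan : Submodule.span K (Set.range v) = ⊤ := by
    have h1 : Set.range v = A '' Set.range (fun i : Fin r => Pi.single i (1:K)) := by
      rw [← Set.range_comp]; rfl
    have h2 : Submodule.span K (Set.range fun i : Fin r => Pi.single i (1:K)) = ⊤ := by
      have h3 := (Pi.basisFun K (Fin r)).span_eq
      have h4 : Set.range (⇑(Pi.basisFun K (Fin r)))
          = Set.range (fun i : Fin r => Pi.single i (1:K)) := by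
        have : ⇑(Pi.basisFun K (Fin r)) = fun i : Fin r => Pi.single i (1:K) := by
          funext i; exact Pi.basisFun_apply K (Fin r) i
        rw [this]
      rwa [h4] at h3
    rw [h1, Submodule.span_image, h2, Submodule.map_top, LinearMap.range_eq_top.2 hA]
  obtain ⟨s, hs_sub, hs_span, hs_ind⟩ := exists_linearIndependent K (Set.range v)
  rw [hspan] at hs_span
  have hb : ⊤ ≤ Submodule.span K (Set.range ((↑) : s → (Fin k → K))) := by
    rw [Subtype.range_coe, hs_span]
  let b : Module.Basis s K (Fin k → K) := Module.Basis.mk hs_ind hb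
  haveI : Fintype s := FiniteDimensional.fintypeBasisIndex b
  have hcard : Fintype.card s = k := by
    have h1 := Module.finrank_eq_card_basis b
    rw [Module.finrank_pi, Fintype.card_fin] at h1
    omega
  let σ : s ≃ Fin k := Fintype.equivFinOfCardEq hcard
  have hchoose : ∀ x : s, ∃ i, v i = (x : Fin k → K) := fun x => hs_sub x.2
  choose c hc using hchoose
  have he : Function.Injective (fun j => c (σ.symm j)) := by
    intro j1 j2 h
    have h2 : ((σ.symm j1 : s) : Fin k → K) = ((σ.symm j2 : s) : Fin k → K) := by
      rw [← hc, ← hc]; exact congrArg v h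
    exact σ.symm.injective (Subtype.coe_injective h2)
  refine ⟨fun j => c (σ.symm j), he, ?_⟩
  · have hind : LinearIndependent K (fun j => v (c (σ.symm j))) := by
      have h5 : (fun j => v (c (σ.symm j))) = (fun x : s => (x : Fin k → K)) ∘ σ.symm := by
        funext j; rw [hc]; rfl
      rw [h5]
      exact hs_ind.comp σ.symm σ.symm.injective
    have hinj : Function.Injective (A ∘ₗ Emap he) := by
      rw [← LinearMap.ker_eq_bot, Submodule.eq_bot_iff]
      intro z hz
      rw [LinearMap.mem_ker] at hz
      have hz' : ∑ j, z j • v (c (σ.symm j)) = 0 := by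
        rw [← hz]
        show _ = A (Emap he z)
        rw [Emap_eq_sum he, map_sum]
        refine Finset.sum_congr rfl fun j _ => ?_
        rw [map_smul]
      have h6 := Fintype.linearIndependent_iff.1 hind z hz'
      funext j
      exact h6 j
    exact ⟨hinj, LinearMap.surjective_of_injective hinj⟩


/-- gluing as a linear map -/
noncomputable def Gmap (he : Function.Injective e) :
    ((Fin k → K) × ({i : Fin r // i ∉ Set.range e} → K)) →ₗ[K] (Fin r → K) where
  toFun p := glue e p.1 p.2
  map_add' p q := by
    funext i
    by_cases hi : i ∈ Set.range e
    · obtain ⟨j, rfl⟩ := hi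
      simp [glue_apply_e he]
    · simp [glue_apply_not _ _ _ hi]
  map_smul' c p := by
    funext i
    by_cases hi : i ∈ Set.range e
    · obtain ⟨j, rfl⟩ := hi
      simp [glue_apply_e he]
    · simp [glue_apply_not _ _ _ hi]

/-- restriction/gluing as a linear equivalence -/
noncomputable def Omap (he : Function.Injective e) :
    (Fin r → K) ≃ₗ[K] ((Fin k → K) × ({i : Fin r // i ∉ Set.range e} → K)) :=
  LinearEquiv.ofLinear
    ((LinearMap.funLeft K K e).prod (LinearMap.funLeft K K Subtype.val))
    (Gmap he)
    (by
      apply LinearMap.ext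
      intro p
      refine Prod.ext ?_ ?_
      · funext j
        exact glue_apply_e he _ _ j
      · funext q
        exact glue_apply_not _ _ _ q.2)
    (by
      apply LinearMap.ext
      intro x
      exact glue_restrict he x)

theorem Omap_symm_apply (he : Function.Injective e) (y : Fin k → K)
    (t : {i : Fin r // i ∉ Set.range e} → K) :
    (Omap he).symm (y, t) = glue e y t := rfl

theorem linear_surjective {χ : (Fin r → K) →ᵃ[K] (Fin k → K)}
    (hχ : Function.Surjective χ) : Function.Surjective χ.linear := by
  intro y
  obtain ⟨x, hx⟩ := hχ (y + χ 0)
  refine ⟨x, ?_⟩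
  have := congrFun (AffineMap.decomp χ) x
  simp only [Pi.add_apply] at this
  have h2 : χ.linear x + χ 0 = y + χ 0 := by rw [← this]; exact hx
  exact add_right_cancel h2

theorem affine_bijective {V W : Type*} [AddCommGroup V] [Module K V] [AddCommGroup W]
    [Module K W] (f : V →ᵃ[K] W) (h : Function.Bijective f.linear) :
    Function.Bijective f := by
  have hd : ∀ x, f x = f.linear x + f 0 := fun x => congrFun (AffineMap.decomp f) x
  constructor
  · intro x y hxy
    rw [hd x, hd y] at hxy
    exact h.1 (add_right_cancel hxy)
  · intro w
    obtain ⟨x, hx⟩ := h.2 (w - f 0)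
    exact ⟨x, by rw [hd x, hx]; abel⟩

/-- a surjective affine map extends to an affine automorphism through restriction -/
theorem exists_flat (he : Function.Injective e) (χ : (Fin r → K) →ᵃ[K] (Fin k → K))
    (hχ : Function.Surjective χ) :
    ∃ Φ : (Fin r → K) ≃ᵃ[K] (Fin r → K), ∀ x, (Φ x) ∘ e = χ x := by
  set A := χ.linear with hA'
  have hA : Function.Surjective A := linear_surjective hχ
  obtain ⟨σ, hσ⟩ := A.exists_rightInverse_of_surjective (LinearMap.range_eq_top.2 hA)
  -- decomposition into (image, kernel)
  let F : (Fin r → K) →ₗ[K] ((Fin k → K) × LinearMap.ker A) :=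
    A.prod ((LinearMap.id - σ ∘ₗ A).codRestrict (LinearMap.ker A) (by
      intro x
      simp only [LinearMap.mem_ker, LinearMap.sub_apply, LinearMap.id_apply,
        LinearMap.coe_comp, Function.comp_apply, map_sub]
      rw [← LinearMap.comp_apply A σ, hσ]
      simp))
  let G : ((Fin k → K) × LinearMap.ker A) →ₗ[K] (Fin r → K) :=
    σ ∘ₗ LinearMap.fst K _ _ + (LinearMap.ker A).subtype ∘ₗ LinearMap.snd K _ _
  have hAσ : ∀ y, A (σ y) = y := fun y => by
    rw [← LinearMap.comp_apply A σ, hσ]; rfl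
  have hFG : F ∘ₗ G = LinearMap.id := by
    apply LinearMap.ext
    rintro ⟨y, w⟩
    have hw : A w.1 = 0 := w.2
    refine Prod.ext ?_ (Subtype.ext ?_)
    · show A (σ y + w.1) = y
      rw [map_add, hAσ, hw, add_zero]
    · show (σ y + w.1) - σ (A (σ y + w.1)) = w.1
      rw [map_add, hAσ, hw, add_zero]
      abel
  have hGF : G ∘ₗ F = LinearMap.id := by
    apply LinearMap.ext
    intro x
    show σ (A x) + (x - σ (A x)) = x
    abel
  let D : (Fin r → K) ≃ₗ[K] ((Fin k → K) × LinearMap.ker A) :=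
    LinearEquiv.ofLinear F G hFG hGF
  -- kernel is isomorphic to functions on the complement
  have hker : Module.finrank K (LinearMap.ker A)
      = Module.finrank K ({i : Fin r // i ∉ Set.range e} → K) := by
    have h1 := LinearMap.finrank_range_add_finrank_ker A
    have h2 : Module.finrank K (LinearMap.range A) = k := by
      rw [LinearMap.range_eq_top.2 hA, finrank_top, Module.finrank_pi, Fintype.card_fin]
    have h3 : Module.finrank K (Fin r → K) = r := by
      rw [Module.finrank_pi, Fintype.card_fin]
    have hc1 : Fintype.card {i : Fin r // i ∈ Set.range e} = k := by
      rw [Fintype.card_congr (Equiv.ofInjective e he).symm, Fintype.card_fin]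
    have h4 : Module.finrank K ({i : Fin r // i ∉ Set.range e} → K)
        = r - k := by
      rw [Module.finrank_pi, Fintype.card_subtype_compl, hc1, Fintype.card_fin]
    rw [h4]
    omega
  let kEq : (LinearMap.ker A) ≃ₗ[K] ({i : Fin r // i ∉ Set.range e} → K) :=
    (FiniteDimensional.nonempty_linearEquiv_of_finrank_eq hker).some
  let Λ : (Fin r → K) ≃ₗ[K] (Fin r → K) :=
    D ≪≫ₗ (LinearEquiv.refl K (Fin k → K)).prodCongr kEq ≪≫ₗ (Omap he).symm
  have hΛ : ∀ x, (Λ x) ∘ e = A x := by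
    intro x
    have h5 : Λ x = glue e (A x) (kEq ((D x).2)) := by
      show (Omap he).symm (((LinearEquiv.refl K (Fin k → K)).prodCongr kEq) (D x)) = _
      rw [show ((LinearEquiv.refl K (Fin k → K)).prodCongr kEq) (D x)
          = ((D x).1, kEq ((D x).2)) from rfl]
      rw [Omap_symm_apply]
      rfl
    rw [h5]
    funext j
    exact glue_apply_e he _ _ j
  set c : Fin r → K := glue e (χ 0) (fun _ => 0) with hc'
  refine ⟨Λ.toAffineEquiv.trans (AffineEquiv.constVAdd K (Fin r → K) c), ?_⟩
  intro x
  funext j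
  show c (e j) + (Λ x) (e j) = χ x j
  have h6 : (Λ x) (e j) = A x j := congrFun (hΛ x) j
  have h7 : c (e j) = χ 0 j := by rw [hc']; exact glue_apply_e he _ _ j
  have h8 : χ x j = A x j + χ 0 j := by
    have := congrFun (AffineMap.decomp χ) x
    simp only [Pi.add_apply] at this
    exact congrFun this j
  rw [h6, h7, h8]
  ring

end Linear

section Counting

variable {K : Type*} [Field K] {k r : ℕ} {e : Fin k → Fin r}

theorem a_pos {B : ℝ} (hB : 0 ≤ B) : (0:ℝ) < ((2 * ⌊B⌋ + 1 : ℤ) : ℝ) := by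
  have := Int.floor_nonneg.2 hB
  exact_mod_cast (by omega : (0:ℤ) < 2 * ⌊B⌋ + 1)

theorem toNat_cast {B : ℝ} (hB : 0 ≤ B) :
    (((2 * ⌊B⌋ + 1).toNat : ℕ) : ℝ) = ((2 * ⌊B⌋ + 1 : ℤ) : ℝ) := by
  have h := Int.floor_nonneg.2 hB
  have h2 : ((2 * ⌊B⌋ + 1).toNat : ℤ) = 2 * ⌊B⌋ + 1 := Int.toNat_of_nonneg (by omega)
  exact_mod_cast congrArg (fun z : ℤ => (z : ℝ)) h2

theorem glue_add (he : Function.Injective e) (y y' : Fin k → K)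
    (t t' : {i : Fin r // i ∉ Set.range e} → K) :
    glue e (y + y') (t + t') = glue e y t + glue e y' t' :=
  (Gmap he).map_add (y, t) (y', t')

theorem latCount_cyl (he : Function.Injective e) (T : Set (Fin k → K)) (B : ℝ) :
    latCount {z : Fin r → K | z ∘ e ∈ T} B
      = latCount T B * (2 * ⌊B⌋ + 1).toNat ^ (Fintype.card {i : Fin r // i ∉ Set.range e}) := by
  rw [latCount_eq, latCount_eq,
    ← card_box (ι := {i : Fin r // i ∉ Set.range e}) (M := ⌊B⌋), ← Finset.card_product]
  apply Finset.card_bij' (fun x _ => ((x ∘ e, fun p => x p.1) :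
      (Fin k → ℤ) × ({i : Fin r // i ∉ Set.range e} → ℤ)))
      (fun p _ => glue e p.1 p.2)
  · intro x hx
    rw [Finset.mem_filter, mem_box] at hx
    rw [Finset.mem_product, Finset.mem_filter, mem_box, mem_box]
    refine ⟨⟨fun j => hx.1 (e j), ?_⟩, fun p => hx.1 p.1⟩
    exact hx.2
  · rintro ⟨y, t⟩ hp
    rw [Finset.mem_product, Finset.mem_filter, mem_box, mem_box] at hp
    rw [Finset.mem_filter, mem_box]
    constructor
    · intro i
      by_cases hi : i ∈ Set.range e
      · obtain ⟨j, rfl⟩ := hi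
        rw [glue_apply_e he]
        exact hp.1.1 j
      · rw [glue_apply_not _ _ _ hi]
        exact hp.2 ⟨i, hi⟩
    · show (fun i => ((glue e y t i : ℤ) : K)) ∘ e ∈ T
      have h1 : (fun i => ((glue e y t i : ℤ) : K))
          = glue e (fun j => ((y j : ℤ) : K)) (fun p => ((t p : ℤ) : K)) :=
        comp_glue he (fun n : ℤ => (n : K)) y t
      rw [h1]
      have h2 : glue e (fun j => ((y j : ℤ) : K)) (fun p => ((t p : ℤ) : K)) ∘ e
          = fun j => ((y j : ℤ) : K) := by
        funext j
        exact glue_apply_e he _ _ j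
      rw [h2]
      exact hp.1.2
  · intro x hx
    exact glue_restrict he x
  · rintro ⟨y, t⟩ hp
    refine Prod.ext ?_ ?_
    · funext j
      exact glue_apply_e he _ _ j
    · funext p
      exact glue_apply_not _ _ _ p.2

theorem bddAbove_terms (S : Set (Fin k → K)) (B : ℝ) (hB : 0 ≤ B) :
    BddAbove (Set.range fun φ : (Fin k → K) ≃ᵃ[K] (Fin k → K) =>
      (latCount (φ '' S) B : ℝ) / ((2 * ⌊B⌋ + 1 : ℤ) : ℝ) ^ k) := by
  refine ⟨1, ?_⟩
  rintro x ⟨φ, rfl⟩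
  rw [div_le_one (pow_pos (a_pos hB) k)]
  calc (latCount (φ '' S) B : ℝ) ≤ (((2 * ⌊B⌋ + 1).toNat ^ k : ℕ) : ℝ) := by
        exact_mod_cast latCount_le _ _
    _ = ((2 * ⌊B⌋ + 1 : ℤ) : ℝ) ^ k := by rw [Nat.cast_pow, toNat_cast hB]

theorem le_latDensity (S : Set (Fin k → K)) (B : ℝ) (hB : 0 ≤ B)
    (φ : (Fin k → K) ≃ᵃ[K] (Fin k → K)) :
    (latCount (φ '' S) B : ℝ) / ((2 * ⌊B⌋ + 1 : ℤ) : ℝ) ^ k ≤ latDensity S B :=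
  le_ciSup (bddAbove_terms S B hB) φ

theorem term_le (S : Set (Fin k → K)) (B : ℝ) (hB : 0 ≤ B)
    (φ : (Fin k → K) ≃ᵃ[K] (Fin k → K)) :
    (latCount (φ '' S) B : ℝ) ≤ latDensity S B * ((2 * ⌊B⌋ + 1 : ℤ) : ℝ) ^ k := by
  have h := le_latDensity S B hB φ
  rwa [div_le_iff₀ (pow_pos (a_pos hB) k)] at h

theorem latDensity_le {n : ℕ} (S : Set (Fin n → K)) (B : ℝ) {c : ℝ}
    [Nonempty ((Fin n → K) ≃ᵃ[K] (Fin n → K))]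
    (h : ∀ φ : (Fin n → K) ≃ᵃ[K] (Fin n → K),
      (latCount (φ '' S) B : ℝ) / ((2 * ⌊B⌋ + 1 : ℤ) : ℝ) ^ n ≤ c) :
    latDensity S B ≤ c :=
  ciSup_le h

theorem slice_bound (χ : (Fin r → K) →ᵃ[K] (Fin k → K)) (hχ : Function.Surjective χ)
    (S : Set (Fin k → K)) (B : ℝ) (hB : 0 ≤ B) :
    (latCount (⇑χ ⁻¹' S) B : ℝ) ≤ latDensity S B * ((2 * ⌊B⌋ + 1 : ℤ) : ℝ) ^ r := by
  obtain ⟨e, he, hbij⟩ := exists_good χ.linear (linear_surjective hχ)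
  have hkr : k ≤ r := by
    have := Fintype.card_le_of_injective e he
    simpa using this
  have hcardP : Fintype.card {i : Fin r // i ∉ Set.range e} = r - k := by
    have hc1 : Fintype.card {i : Fin r // i ∈ Set.range e} = k := by
      rw [Fintype.card_congr (Equiv.ofInjective e he).symm, Fintype.card_fin]
    rw [Fintype.card_subtype_compl, hc1, Fintype.card_fin]
  rw [latCount_eq]
  have hmaps : ∀ x ∈ (box (Fin r) ⌊B⌋).filter
      (fun x => (fun i => ((x i : ℤ) : K)) ∈ ⇑χ ⁻¹' S),
      (fun p : {i : Fin r // i ∉ Set.range e} => x p.1)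
        ∈ box {i : Fin r // i ∉ Set.range e} ⌊B⌋ := by
    intro x hx
    rw [Finset.mem_filter, mem_box] at hx
    rw [mem_box]
    exact fun p => hx.1 p.1
  rw [Finset.card_eq_sum_card_fiberwise hmaps]
  have hbound : ∀ t ∈ box {i : Fin r // i ∉ Set.range e} ⌊B⌋,
      ((((box (Fin r) ⌊B⌋).filter
          (fun x => (fun i => ((x i : ℤ) : K)) ∈ ⇑χ ⁻¹' S)).filter
          (fun x => (fun p : {i : Fin r // i ∉ Set.range e} => x p.1) = t)).card : ℝ)
        ≤ latDensity S B * ((2 * ⌊B⌋ + 1 : ℤ) : ℝ) ^ k := by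
    intro t ht
    rw [mem_box] at ht
    -- build the slice affine equivalence
    set c : Fin r → K := glue e (fun _ => 0) (fun p => ((t p : ℤ) : K)) with hc
    set aff : (Fin k → K) →ᵃ[K] (Fin r → K) :=
      (Emap he).toAffineMap + AffineMap.const K (Fin k → K) c with haffdef
    set g := χ.comp aff with hg
    have hglin : g.linear = χ.linear ∘ₗ Emap he := by
      show (χ.linear.comp aff.linear) = _
      congr 1
      rw [haffdef, AffineMap.add_linear]
      simp
    have hgbij : Function.Bijective g := affine_bijective g (by rw [hglin]; exact hbij)
    let Geq : (Fin k → K) ≃ᵃ[K] (Fin k → K) :=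
      { toEquiv := Equiv.ofBijective g hgbij
        linear := LinearEquiv.ofBijective g.linear (by rw [hglin]; exact hbij)
        map_vadd' := fun p v => g.map_vadd' p v }
    have hGeq : ∀ z, Geq z = g z := fun _ => rfl
    have hkey : ∀ y : Fin k → ℤ,
        Geq (fun j => ((y j : ℤ) : K)) = χ (fun i => ((glue e y t i : ℤ) : K)) := by
      intro y
      rw [hGeq]
      show χ (aff _) = _
      have h1 : aff (fun j => ((y j : ℤ) : K))
          = glue e (fun j => ((y j : ℤ) : K)) (fun _ => 0) + c := rfl
      have h2 : (fun i => ((glue e y t i : ℤ) : K))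
          = glue e (fun j => ((y j : ℤ) : K)) (fun p => ((t p : ℤ) : K)) :=
        comp_glue he (fun n : ℤ => (n : K)) y t
      rw [h1, h2, hc]
      congr 1
      funext i
      by_cases hi : i ∈ Set.range e
      · obtain ⟨j, rfl⟩ := hi
        simp [glue_apply_e he]
      · simp [glue_apply_not _ _ _ hi]
    have himg : ⇑Geq.symm '' S = ⇑Geq ⁻¹' S := by
      ext z
      constructor
      · rintro ⟨w, hw, rfl⟩
        show Geq (Geq.symm w) ∈ S
        rwa [AffineEquiv.apply_symm_apply]
      · intro hz
        exact ⟨Geq z, hz, AffineEquiv.symm_apply_apply _ _⟩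
    have hcard : (((box (Fin r) ⌊B⌋).filter
          (fun x => (fun i => ((x i : ℤ) : K)) ∈ ⇑χ ⁻¹' S)).filter
          (fun x => (fun p : {i : Fin r // i ∉ Set.range e} => x p.1) = t)).card
        = latCount (⇑Geq.symm '' S) B := by
      rw [latCount_eq]
      apply Finset.card_bij' (fun x _ => x ∘ e) (fun y _ => glue e y t)
      · intro x hx
        rw [Finset.mem_filter] at hx
        obtain ⟨hx1, hx2⟩ := hx
        rw [Finset.mem_filter, mem_box] at hx1
        rw [Finset.mem_filter, mem_box]
        refine ⟨fun j => hx1.1 (e j), ?_⟩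
        rw [himg]
        show Geq (fun j => ((x (e j) : ℤ) : K)) ∈ S
        have h5 := hkey (x ∘ e)
        simp only [Function.comp_apply] at h5
        rw [h5]
        have h4 : glue e (x ∘ e) t = x := by
          rw [← hx2]
          exact glue_restrict he x
        rw [h4]
        exact hx1.2
      · intro y hy
        rw [Finset.mem_filter, mem_box] at hy
        rw [Finset.mem_filter, Finset.mem_filter, mem_box]
        refine ⟨⟨?_, ?_⟩, ?_⟩
        · intro i
          by_cases hi : i ∈ Set.range e
          · obtain ⟨j, rfl⟩ := hi
            rw [glue_apply_e he]
            exact hy.1 j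
          · rw [glue_apply_not _ _ _ hi]
            exact ht ⟨i, hi⟩
        · show χ (fun i => ((glue e y t i : ℤ) : K)) ∈ S
          rw [← hkey y]
          rw [himg] at hy
          exact hy.2
        · funext p
          exact glue_apply_not _ _ _ p.2
      · intro x hx
        rw [Finset.mem_filter] at hx
        rw [← hx.2]
        exact glue_restrict he x
      · intro y hy
        funext j
        exact glue_apply_e he _ _ j
    rw [hcard]
    exact term_le S B hB Geq.symm
  calc (((∑ t ∈ box {i : Fin r // i ∉ Set.range e} ⌊B⌋,
        (((box (Fin r) ⌊B⌋).filter
          (fun x => (fun i => ((x i : ℤ) : K)) ∈ ⇑χ ⁻¹' S)).filter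
          (fun x => (fun p : {i : Fin r // i ∉ Set.range e} => x p.1) = t)).card) : ℕ) : ℝ)
      = ∑ t ∈ box {i : Fin r // i ∉ Set.range e} ⌊B⌋,
        ((((box (Fin r) ⌊B⌋).filter
          (fun x => (fun i => ((x i : ℤ) : K)) ∈ ⇑χ ⁻¹' S)).filter
          (fun x => (fun p : {i : Fin r // i ∉ Set.range e} => x p.1) = t)).card : ℝ) := by
        push_cast
        rfl
    _ ≤ ∑ _t ∈ box {i : Fin r // i ∉ Set.range e} ⌊B⌋,
        latDensity S B * ((2 * ⌊B⌋ + 1 : ℤ) : ℝ) ^ k := Finset.sum_le_sum hbound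
    _ = ((box {i : Fin r // i ∉ Set.range e} ⌊B⌋).card : ℝ)
        * (latDensity S B * ((2 * ⌊B⌋ + 1 : ℤ) : ℝ) ^ k) := by
        rw [Finset.sum_const, nsmul_eq_mul]
    _ = latDensity S B * ((2 * ⌊B⌋ + 1 : ℤ) : ℝ) ^ r := by
        rw [card_box, hcardP]
        rw [Nat.cast_pow, toNat_cast hB]
        rw [show (((2 * ⌊B⌋ + 1 : ℤ) : ℝ)) ^ (r - k)
            * (latDensity S B * ((2 * ⌊B⌋ + 1 : ℤ) : ℝ) ^ k)
            = latDensity S B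
              * (((2 * ⌊B⌋ + 1 : ℤ) : ℝ) ^ (r - k) * ((2 * ⌊B⌋ + 1 : ℤ) : ℝ) ^ k) by ring]
        rw [← pow_add, Nat.sub_add_cancel hkr]

end Counting

end St13

set_option maxHeartbeats 4000000 in
set_option synthInstance.maxHeartbeats 1000000 in
/-- Proposition `slicing`.
Let `𝔽 ⊆ ℂ` be a subfield, `k ≤ r`, and `ψ : 𝔽^r → 𝔽^k` a surjective affine-linear map.
Then for every `S ⊆ 𝔽^k` and `B ≥ 0`, `d_{ψ⁻¹(S)}(B) = d_S(B)`. -/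
theorem statement13 (𝔽 : Subfield ℂ) (k r : ℕ) (hk : 1 ≤ k) (hkr : k ≤ r)
    (ψ : (Fin r → ↥𝔽) →ᵃ[↥𝔽] (Fin k → ↥𝔽)) (hψ : Function.Surjective ψ)
    (S : Set (Fin k → ↥𝔽)) (B : ℝ) (hB : 0 ≤ B) :
    latDensity (ψ ⁻¹' S) B = latDensity S B := by
  classical
  haveI h1 : Nonempty ((Fin r → ↥𝔽) ≃ᵃ[↥𝔽] (Fin r → ↥𝔽)) := ⟨AffineEquiv.refl _ _⟩
  haveI h2 : Nonempty ((Fin k → ↥𝔽) ≃ᵃ[↥𝔽] (Fin k → ↥𝔽)) := ⟨AffineEquiv.refl _ _⟩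
  apply le_antisymm
  · apply St13.latDensity_le
    intro φ
    have himg : ⇑φ '' (⇑ψ ⁻¹' S) = ⇑(ψ.comp φ.symm.toAffineMap) ⁻¹' S := by
      ext z
      constructor
      · rintro ⟨x, hx, rfl⟩
        show ψ (φ.symm (φ x)) ∈ S
        rwa [AffineEquiv.symm_apply_apply]
      · intro hz
        exact ⟨φ.symm z, hz, AffineEquiv.apply_symm_apply _ _⟩
    rw [himg, div_le_iff₀ (pow_pos (St13.a_pos hB) r)]
    have hsurj : Function.Surjective ⇑(ψ.comp φ.symm.toAffineMap) := by
      intro y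
      obtain ⟨x, hx⟩ := hψ y
      refine ⟨φ x, ?_⟩
      show ψ (φ.symm (φ x)) = y
      rwa [AffineEquiv.symm_apply_apply]
    exact St13.slice_bound _ hsurj S B hB
  · apply St13.latDensity_le
    intro φ
    have he : Function.Injective (Fin.castLE hkr) := Fin.castLE_injective hkr
    have hχ : Function.Surjective ⇑(φ.toAffineMap.comp ψ) := φ.surjective.comp hψ
    obtain ⟨Φ, hΦ⟩ := St13.exists_flat he (φ.toAffineMap.comp ψ) hχ
    have himg : ⇑Φ '' (⇑ψ ⁻¹' S)
        = {z : Fin r → ↥𝔽 | z ∘ (Fin.castLE hkr) ∈ ⇑φ '' S} := by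
      ext z
      constructor
      · rintro ⟨x, hx, rfl⟩
        show (Φ x) ∘ (Fin.castLE hkr) ∈ ⇑φ '' S
        rw [hΦ x]
        exact ⟨ψ x, hx, rfl⟩
      · intro hz
        refine ⟨Φ.symm z, ?_, AffineEquiv.apply_symm_apply _ _⟩
        have h3 : (Φ (Φ.symm z)) ∘ (Fin.castLE hkr) = z ∘ (Fin.castLE hkr) := by
          rw [AffineEquiv.apply_symm_apply]
        rw [hΦ (Φ.symm z)] at h3
        obtain ⟨w, hw, hw2⟩ := hz
        have h4 : φ (ψ (Φ.symm z)) = φ w := by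
          rw [hw2]; exact h3
        show ψ (Φ.symm z) ∈ S
        rwa [φ.injective h4]
    have hcnt : latCount (⇑Φ '' (⇑ψ ⁻¹' S)) B
        = latCount (⇑φ '' S) B * (2 * ⌊B⌋ + 1).toNat
            ^ (Fintype.card {i : Fin r // i ∉ Set.range (Fin.castLE hkr)}) := by
      rw [himg]
      exact St13.latCount_cyl he _ B
    have hcardP : Fintype.card {i : Fin r // i ∉ Set.range (Fin.castLE hkr)} = r - k := by
      have hc1 : Fintype.card {i : Fin r // i ∈ Set.range (Fin.castLE hkr)} = k := by
        rw [Fintype.card_congr (Equiv.ofInjective _ he).symm, Fintype.card_fin]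
      rw [Fintype.card_subtype_compl, hc1, Fintype.card_fin]
    have hterm := St13.le_latDensity (⇑ψ ⁻¹' S) B hB Φ
    rw [hcnt, hcardP] at hterm
    have ha := St13.a_pos hB
    have harith : ((latCount (⇑φ '' S) B * (2 * ⌊B⌋ + 1).toNat ^ (r - k) : ℕ) : ℝ)
          / ((2 * ⌊B⌋ + 1 : ℤ) : ℝ) ^ r
        = (latCount (⇑φ '' S) B : ℝ) / ((2 * ⌊B⌋ + 1 : ℤ) : ℝ) ^ k := by
      rw [Nat.cast_mul, Nat.cast_pow, St13.toNat_cast hB]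
      rw [show ((2 * ⌊B⌋ + 1 : ℤ) : ℝ) ^ r
          = ((2 * ⌊B⌋ + 1 : ℤ) : ℝ) ^ k * ((2 * ⌊B⌋ + 1 : ℤ) : ℝ) ^ (r - k) from by
        rw [← pow_add, Nat.add_sub_cancel' hkr]]
      rw [mul_div_mul_right _ _ (ne_of_gt (pow_pos ha (r - k)))]
    rw [harith] at hterm
    exact hterm
end

section
/- Let 𝔽 be a subfield of ℂ and k ≥ 1. Suppose 0 ≤ B_1 ≤ B_2 ≤ c·B_1 for some real c ≥ 1. Then for every set S ⊆ 𝔽^k, (1/(3c)^k)·d_S(B_1) ≤ d_S(B_2) ≤ 2^k·d_S(B_1). -/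
lemma abs_le_iff_floor {z : ℤ} {B : ℝ} : |(z : ℝ)| ≤ B ↔ |z| ≤ ⌊B⌋ := by
  rw [Int.le_floor]; push_cast; rfl

lemma latSet_finite {K : Type*} [Field K] {k : ℕ} (S : Set (Fin k → K)) (B : ℝ) :
    {x : Fin k → ℤ | (fun i => ((x i : ℤ) : K)) ∈ S ∧ ∀ i, |(x i : ℝ)| ≤ B}.Finite := by
  apply Set.Finite.subset (Set.Finite.pi (fun i : Fin k => Set.finite_Icc (-⌊B⌋) ⌊B⌋))
  intro x hx
  simp only [Set.mem_pi, Set.mem_univ, Set.mem_Icc, forall_true_left]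
  exact fun i => abs_le.mp ((abs_le_iff_floor).mp (hx.2 i))

lemma latCount_mono {K : Type*} [Field K] {k : ℕ} {S T : Set (Fin k → K)} {B B' : ℝ}
    (hST : S ⊆ T) (hB : B ≤ B') : latCount S B ≤ latCount T B' := by
  apply Nat.card_mono (latSet_finite T B')
  exact fun x hx => ⟨hST hx.1, fun i => le_trans (hx.2 i) hB⟩

lemma latCount_congr {K : Type*} [Field K] {k : ℕ} (S : Set (Fin k → K)) {B B' : ℝ}
    (h : ⌊B⌋ = ⌊B'⌋) : latCount S B = latCount S B' := by
  unfold latCount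
  have hset : {x : Fin k → ℤ | (fun i => ((x i : ℤ) : K)) ∈ S ∧ ∀ i, |(x i : ℝ)| ≤ B}
      = {x : Fin k → ℤ | (fun i => ((x i : ℤ) : K)) ∈ S ∧ ∀ i, |(x i : ℝ)| ≤ B'} := by
    ext x
    simp only [Set.mem_setOf_eq, and_congr_right_iff]
    intro _
    constructor <;> intro hx i
    · exact abs_le_iff_floor.mpr (h ▸ abs_le_iff_floor.mp (hx i))
    · exact abs_le_iff_floor.mpr (h ▸ abs_le_iff_floor.mp (hx i))
  rw [hset]

-- total count bound
lemma latCount_le_total {K : Type*} [Field K] {k : ℕ} (S : Set (Fin k → K)) {B : ℝ}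
    (hB : 0 ≤ B) : (latCount S B : ℝ) ≤ ((2 * ⌊B⌋ + 1 : ℤ) : ℝ) ^ k := by
  have hfl : (0:ℤ) ≤ ⌊B⌋ := Int.floor_nonneg.mpr hB
  have key : latCount S B ≤ (2 * ⌊B⌋ + 1).toNat ^ k := by
    unfold latCount
    have h1 : Nat.card {x : Fin k → ℤ | (fun i => ((x i : ℤ) : K)) ∈ S ∧ ∀ i, |(x i : ℝ)| ≤ B}
        ≤ Nat.card (Fin k → (Set.Icc (-⌊B⌋) ⌊B⌋ : Set ℤ)) := by
      apply Nat.card_le_card_of_injective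
        (fun x => fun i => ⟨x.1 i, abs_le.mp (abs_le_iff_floor.mp (x.2.2 i))⟩)
      intro x y hxy
      ext i
      exact congrArg Subtype.val (congrFun hxy i)
    refine h1.trans ?_
    rw [Nat.card_pi]
    have hicc : Nat.card (Set.Icc (-⌊B⌋) ⌊B⌋ : Set ℤ) = (2 * ⌊B⌋ + 1).toNat := by
      rw [Nat.card_coe_set_eq, Set.ncard_eq_toFinset_card', Set.toFinset_Icc, Int.card_Icc]
      have h3 : ⌊B⌋ + 1 - -⌊B⌋ = 2 * ⌊B⌋ + 1 := by ring
      rw [h3]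
    simp only [hicc, Finset.prod_const, Finset.card_univ, Fintype.card_fin]
    exact le_refl _
  have h2 : (((2 * ⌊B⌋ + 1).toNat : ℤ) : ℝ) = ((2 * ⌊B⌋ + 1 : ℤ) : ℝ) := by
    exact_mod_cast congrArg (Int.cast : ℤ → ℝ) (Int.toNat_of_nonneg (by omega : (0:ℤ) ≤ 2 * ⌊B⌋ + 1))
  calc (latCount S B : ℝ) ≤ (((2 * ⌊B⌋ + 1).toNat ^ k : ℕ) : ℝ) := by exact_mod_cast key
    
    _ = ((2 * ⌊B⌋ + 1 : ℤ) : ℝ) ^ k := by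
        rw [Nat.cast_pow]
        exact_mod_cast congrArg (fun r : ℝ => r ^ k) h2

lemma denom_pos {k : ℕ} {B : ℝ} (hB : 0 ≤ B) : (0:ℝ) < ((2 * ⌊B⌋ + 1 : ℤ) : ℝ) ^ k := by
  have hfl : (0:ℤ) ≤ ⌊B⌋ := Int.floor_nonneg.mpr hB
  have : (0:ℝ) < ((2 * ⌊B⌋ + 1 : ℤ) : ℝ) := by
    have : (0:ℤ) < 2 * ⌊B⌋ + 1 := by omega
    exact_mod_cast this
  positivity

lemma latDensity_bdd {K : Type*} [Field K] {k : ℕ} (S : Set (Fin k → K)) {B : ℝ} (hB : 0 ≤ B) :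
    BddAbove (Set.range fun φ : (Fin k → K) ≃ᵃ[K] (Fin k → K) =>
      (latCount (φ '' S) B : ℝ) / ((2 * ⌊B⌋ + 1 : ℤ) : ℝ) ^ k) := by
  refine ⟨1, ?_⟩
  rintro x ⟨φ, rfl⟩
  rw [div_le_one (denom_pos hB)]
  exact latCount_le_total _ hB

lemma le_latDensity {K : Type*} [Field K] {k : ℕ} (S : Set (Fin k → K)) {B : ℝ} (hB : 0 ≤ B)
    (φ : (Fin k → K) ≃ᵃ[K] (Fin k → K)) :
    (latCount (φ '' S) B : ℝ) / ((2 * ⌊B⌋ + 1 : ℤ) : ℝ) ^ k ≤ latDensity S B :=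
  le_ciSup (latDensity_bdd S hB) φ

lemma latDensity_nonneg {K : Type*} [Field K] {k : ℕ} (S : Set (Fin k → K)) {B : ℝ}
    (hB : 0 ≤ B) : 0 ≤ latDensity S B :=
  Real.iSup_nonneg fun φ => div_nonneg (Nat.cast_nonneg _) (denom_pos hB).le

lemma latDensity_le_one {K : Type*} [Field K] {k : ℕ} (S : Set (Fin k → K)) {B : ℝ}
    (hB : 0 ≤ B) : latDensity S B ≤ 1 := by
  apply ciSup_le
  intro φ
  rw [div_le_one (denom_pos hB)]
  exact latCount_le_total _ hB

noncomputable def shiftScale (K : Type*) [Field K] [CharZero K] {k : ℕ} (m : ℕ) (hm : 0 < m)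
    (t : Fin k → Fin m) : (Fin k → K) ≃ᵃ[K] (Fin k → K) :=
  (AffineEquiv.constVAdd K (Fin k → K) (-(fun i => ((t i : ℕ) : K)))).trans
    (LinearEquiv.smulOfNeZero K (Fin k → K) ((m : K)⁻¹)
      (inv_ne_zero (Nat.cast_ne_zero.mpr hm.ne'))).toAffineEquiv

lemma shiftScale_apply (K : Type*) [Field K] [CharZero K] {k : ℕ} (m : ℕ) (hm : 0 < m)
    (t : Fin k → Fin m) (x : Fin k → K) (i : Fin k) :
    shiftScale K m hm t x i = (m : K)⁻¹ * (x i - ((t i : ℕ) : K)) := by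
  simp only [shiftScale, AffineEquiv.trans_apply, AffineEquiv.constVAdd_apply,
    LinearEquiv.coe_toAffineEquiv, LinearEquiv.smulOfNeZero_apply]
  simp only [Pi.smul_apply, Pi.vadd_apply]
  show (m:K)⁻¹ * ((-fun i => ((t i : ℕ):K)) i + x i) = _
  simp [sub_eq_neg_add]

lemma nat_card_sigma {ι : Type*} [Fintype ι] (C : ι → Type*) [∀ i, Finite (C i)] :
    Nat.card ((i : ι) × C i) = ∑ i, Nat.card (C i) := by
  classical
  letI : ∀ i, Fintype (C i) := fun i => Fintype.ofFinite _
  simp [Nat.card_eq_fintype_card, Fintype.card_sigma]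

lemma latCount_cover {K : Type*} [Field K] [CharZero K] {k : ℕ} (T : Set (Fin k → K))
    {B₁ B₂ : ℝ} (h1 : 0 ≤ B₁) (m : ℕ) (hm : 0 < m) (hmb : ⌊B₂⌋ ≤ (m : ℤ) * ⌊B₁⌋) :
    latCount T B₂ ≤ ∑ t : Fin k → Fin m, latCount ((shiftScale K m hm t) '' T) B₁ := by
  classical
  have hmz : (0 : ℤ) < (m : ℤ) := by exact_mod_cast hm
  have hmK : ((m : ℕ) : K) ≠ 0 := Nat.cast_ne_zero.mpr hm.ne'
  set A := {x : Fin k → ℤ | (fun i => ((x i : ℤ) : K)) ∈ T ∧ ∀ i, |(x i : ℝ)| ≤ B₂} with hA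
  set C : (Fin k → Fin m) → Set (Fin k → ℤ) := fun t =>
    {x : Fin k → ℤ | (fun i => ((x i : ℤ) : K)) ∈ (shiftScale K m hm t) '' T ∧
      ∀ i, |(x i : ℝ)| ≤ B₁} with hC
  haveI : ∀ t, Finite (C t) := fun t => (latSet_finite _ B₁).to_subtype
  -- the map
  have key : Nat.card A ≤ Nat.card ((t : Fin k → Fin m) × C t) := by
    have hmem : ∀ (z : Fin k → ℤ), z ∈ A →
        (fun i => z i / (m : ℤ)) ∈ C (fun i => ⟨(z i % (m : ℤ)).toNat,
          (Int.toNat_lt' hm).mpr (Int.emod_lt_of_pos _ hmz)⟩) := by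
      intro z hz
      constructor
      · refine ⟨fun i => ((z i : ℤ) : K), hz.1, funext fun i => ?_⟩
        rw [shiftScale_apply]
        have hnn : (0:ℤ) ≤ z i % (m:ℤ) := Int.emod_nonneg _ hmz.ne'
        have hcast : ((((z i % (m:ℤ)).toNat : ℕ) : K)) = ((z i % (m:ℤ) : ℤ) : K) := by
          rw [← Int.cast_natCast, Int.toNat_of_nonneg hnn]
        simp only [hcast]
        have hdm : (m : ℤ) * (z i / (m:ℤ)) + z i % (m:ℤ) = z i := Int.mul_ediv_add_emod _ _
        have hdmK := congrArg (fun n : ℤ => (n : K)) hdm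
        push_cast at hdmK
        have hsub : ((z i : ℤ) : K) - ((z i % (m:ℤ) : ℤ) : K) = ((m:ℕ):K) * ((z i / (m:ℤ) : ℤ) : K) := by
          linear_combination -hdmK
        rw [hsub, inv_mul_cancel_left₀ hmK]
      · intro i
        have hzb : |z i| ≤ ⌊B₂⌋ := abs_le_iff_floor.mp (hz.2 i)
        rw [abs_le] at hzb
        apply abs_le_iff_floor.mpr
        rw [abs_le]
        constructor
        · rw [Int.le_ediv_iff_mul_le hmz]
          calc -⌊B₁⌋ * (m:ℤ) = -((m:ℤ) * ⌊B₁⌋) := by ring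
            _ ≤ -⌊B₂⌋ := by omega
            _ ≤ z i := hzb.1
        · calc z i / (m:ℤ) ≤ ((m:ℤ) * ⌊B₁⌋) / (m:ℤ) :=
              Int.ediv_le_ediv hmz (le_trans hzb.2 hmb)
            _ = ⌊B₁⌋ := Int.mul_ediv_cancel_left _ hmz.ne'
    let F : A → (t : Fin k → Fin m) × C t := fun z =>
      ⟨fun i => ⟨(z.1 i % (m : ℤ)).toNat, (Int.toNat_lt' hm).mpr (Int.emod_lt_of_pos _ hmz)⟩,
        ⟨fun i => z.1 i / (m : ℤ), hmem z.1 z.2⟩⟩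
    apply Nat.card_le_card_of_injective F
    intro x y h
    have hq : ∀ i, x.1 i / (m:ℤ) = y.1 i / (m:ℤ) := fun i =>
      congrFun (congrArg (fun s : (t : Fin k → Fin m) × C t => (s.2 : Fin k → ℤ)) h) i
    have hr : ∀ i, x.1 i % (m:ℤ) = y.1 i % (m:ℤ) := by
      intro i
      have := congrArg (fun s : (t : Fin k → Fin m) × C t => ((s.1 i : ℕ) : ℤ)) h
      simpa [F, Int.toNat_of_nonneg (Int.emod_nonneg _ hmz.ne')] using this
    apply Subtype.ext
    funext i
    have hx := Int.mul_ediv_add_emod (x.1 i) (m:ℤ)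
    have hy := Int.mul_ediv_add_emod (y.1 i) (m:ℤ)
    rw [← hx, ← hy, hq i, hr i]
  calc latCount T B₂ = Nat.card A := rfl
    _ ≤ Nat.card ((t : Fin k → Fin m) × C t) := key
    _ = ∑ t, Nat.card (C t) := nat_card_sigma _
    _ = ∑ t : Fin k → Fin m, latCount ((shiftScale K m hm t) '' T) B₁ := rfl

lemma latCount_empty {K : Type*} [Field K] {k : ℕ} (B : ℝ) :
    latCount (∅ : Set (Fin k → K)) B = 0 := by
  unfold latCount
  haveI : IsEmpty {x : Fin k → ℤ | (fun i => ((x i : ℤ) : K)) ∈ (∅ : Set (Fin k → K)) ∧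
      ∀ i, |(x i : ℝ)| ≤ B} := ⟨fun x => x.2.1⟩
  exact Nat.card_of_isEmpty

lemma upper_main {K : Type*} [Field K] [CharZero K] {k : ℕ} (S : Set (Fin k → K))
    {B₁ B₂ : ℝ} (h0 : 0 ≤ B₁) (h12 : B₁ ≤ B₂) (ha1 : 1 ≤ ⌊B₁⌋) :
    latDensity S B₂ ≤ 2 ^ k * latDensity S B₁ := by
  have h0' : (0:ℝ) ≤ B₂ := le_trans h0 h12
  have hab : ⌊B₁⌋ ≤ ⌊B₂⌋ := Int.floor_le_floor h12
  have hDa : (0:ℝ) < ((2 * ⌊B₁⌋ + 1 : ℤ) : ℝ) ^ k := denom_pos h0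
  have hDb : (0:ℝ) < ((2 * ⌊B₂⌋ + 1 : ℤ) : ℝ) ^ k := denom_pos h0'
  have hd1 : 0 ≤ latDensity S B₁ := latDensity_nonneg S h0
  set m : ℕ := ⌊B₂⌋.toNat / ⌊B₁⌋.toNat + 1 with hmdef
  have hm : 0 < m := Nat.succ_pos _
  have hb' : ((⌊B₂⌋.toNat : ℕ) : ℤ) = ⌊B₂⌋ := Int.toNat_of_nonneg (by omega)
  have ha' : ((⌊B₁⌋.toNat : ℕ) : ℤ) = ⌊B₁⌋ := Int.toNat_of_nonneg (by omega)
  have hanat : 0 < ⌊B₁⌋.toNat := by omega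
  have hmb : ⌊B₂⌋ ≤ (m : ℤ) * ⌊B₁⌋ := by
    have h2 := Nat.div_add_mod ⌊B₂⌋.toNat ⌊B₁⌋.toNat
    have h3 := Nat.mod_lt ⌊B₂⌋.toNat hanat
    have h1 : ⌊B₂⌋.toNat < m * ⌊B₁⌋.toNat := by
      have hmm : m * ⌊B₁⌋.toNat =
          ⌊B₁⌋.toNat * (⌊B₂⌋.toNat / ⌊B₁⌋.toNat) + ⌊B₁⌋.toNat := by
        rw [hmdef]; ring
      rw [hmm]
      linarith
    calc ⌊B₂⌋ = ((⌊B₂⌋.toNat : ℕ) : ℤ) := hb'.symm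
      _ ≤ (m : ℤ) * ((⌊B₁⌋.toNat : ℕ) : ℤ) := by exact_mod_cast h1.le
      _ = (m : ℤ) * ⌊B₁⌋ := by rw [ha']
  have hma : (m : ℤ) * ⌊B₁⌋ ≤ ⌊B₁⌋ + ⌊B₂⌋ := by
    have h1 : (⌊B₂⌋.toNat / ⌊B₁⌋.toNat) * ⌊B₁⌋.toNat ≤ ⌊B₂⌋.toNat := Nat.div_mul_le_self _ _
    have h4 : ((⌊B₂⌋.toNat / ⌊B₁⌋.toNat : ℕ) : ℤ) * ⌊B₁⌋ ≤ ⌊B₂⌋ := by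
      rw [← ha', ← hb']
      exact_mod_cast h1
    have h5 : (m : ℤ) = ((⌊B₂⌋.toNat / ⌊B₁⌋.toNat : ℕ) : ℤ) + 1 := by
      rw [hmdef]; push_cast; ring
    rw [h5]
    linarith
  have hm2 : (m : ℤ) * (2 * ⌊B₁⌋ + 1) ≤ 2 * (2 * ⌊B₂⌋ + 1) := by
    have h2a1 : (0:ℤ) ≤ 2 * ⌊B₁⌋ + 1 := by omega
    have hkey : ⌊B₁⌋ * ((m : ℤ) * (2 * ⌊B₁⌋ + 1)) ≤ ⌊B₁⌋ * (2 * (2 * ⌊B₂⌋ + 1)) := by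
      nlinarith [mul_le_mul_of_nonneg_right hma h2a1,
        mul_nonneg (show (0:ℤ) ≤ 2 * ⌊B₁⌋ - 1 by omega) (show (0:ℤ) ≤ ⌊B₂⌋ - ⌊B₁⌋ by omega)]
    exact le_of_mul_le_mul_left hkey (by omega)
  clear hmdef hb' ha' hanat
  clear_value m
  apply ciSup_le
  intro φ
  have cov := latCount_cover (K := K) (φ '' S) h0 m hm hmb
  have covR : (latCount (φ '' S) B₂ : ℝ) ≤
      ∑ t : Fin k → Fin m, (latCount ((shiftScale K m hm t) '' (φ '' S)) B₁ : ℝ) := by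
    exact_mod_cast cov
  have each : ∀ t : Fin k → Fin m, (latCount ((shiftScale K m hm t) '' (φ '' S)) B₁ : ℝ) ≤
      latDensity S B₁ * ((2 * ⌊B₁⌋ + 1 : ℤ) : ℝ) ^ k := by
    intro t
    have h := le_latDensity S h0 (φ.trans (shiftScale K m hm t))
    have himg : (φ.trans (shiftScale K m hm t)) '' S = (shiftScale K m hm t) '' (φ '' S) := by
      rw [← Set.image_comp]
      rfl
    rw [himg] at h
    exact (div_le_iff₀ hDa).mp h
  have hsum : ∑ t : Fin k → Fin m, (latCount ((shiftScale K m hm t) '' (φ '' S)) B₁ : ℝ) ≤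
      ((m : ℝ) ^ k) * (latDensity S B₁ * ((2 * ⌊B₁⌋ + 1 : ℤ) : ℝ) ^ k) := by
    calc ∑ t : Fin k → Fin m, (latCount ((shiftScale K m hm t) '' (φ '' S)) B₁ : ℝ)
        ≤ ∑ _t : Fin k → Fin m, latDensity S B₁ * ((2 * ⌊B₁⌋ + 1 : ℤ) : ℝ) ^ k :=
          Finset.sum_le_sum (fun t _ => each t)
      _ = (Fintype.card (Fin k → Fin m) : ℝ) * (latDensity S B₁ * ((2 * ⌊B₁⌋ + 1 : ℤ) : ℝ) ^ k) := by
          rw [Finset.sum_const, Finset.card_univ, nsmul_eq_mul]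
      _ = ((m : ℝ) ^ k) * (latDensity S B₁ * ((2 * ⌊B₁⌋ + 1 : ℤ) : ℝ) ^ k) := by
          rw [Fintype.card_pi_const, Fintype.card_fin]
          push_cast
          ring
  rw [div_le_iff₀ hDb]
  have hcast2 : ((m : ℝ)) * ((2 * ⌊B₁⌋ + 1 : ℤ) : ℝ) ≤ 2 * ((2 * ⌊B₂⌋ + 1 : ℤ) : ℝ) := by
    have h : (((m : ℤ) * (2 * ⌊B₁⌋ + 1) : ℤ) : ℝ) ≤ ((2 * (2 * ⌊B₂⌋ + 1) : ℤ) : ℝ) :=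
      Int.cast_le.mpr hm2
    push_cast at h ⊢
    linarith
  have hmul : ((m : ℝ) * ((2 * ⌊B₁⌋ + 1 : ℤ) : ℝ)) ^ k ≤
      (2 * ((2 * ⌊B₂⌋ + 1 : ℤ) : ℝ)) ^ k :=
    pow_le_pow_left₀ (by positivity) hcast2 k
  calc (latCount (φ '' S) B₂ : ℝ)
      ≤ ((m : ℝ) ^ k) * (latDensity S B₁ * ((2 * ⌊B₁⌋ + 1 : ℤ) : ℝ) ^ k) :=
        le_trans covR hsum
    _ = latDensity S B₁ * ((m : ℝ) * ((2 * ⌊B₁⌋ + 1 : ℤ) : ℝ)) ^ k := by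
        rw [mul_pow]; ring
    _ ≤ latDensity S B₁ * (2 * ((2 * ⌊B₂⌋ + 1 : ℤ) : ℝ)) ^ k :=
        mul_le_mul_of_nonneg_left hmul hd1
    _ = 2 ^ k * latDensity S B₁ * ((2 * ⌊B₂⌋ + 1 : ℤ) : ℝ) ^ k := by
        rw [mul_pow]; ring


set_option synthInstance.maxHeartbeats 1000000 in
/-- Proposition `no-jumps`.
Let `𝔽 ⊆ ℂ` be a subfield and `k ≥ 1`. If `0 ≤ B₁ ≤ B₂ ≤ c·B₁` for some `c ≥ 1`, then
for every `S ⊆ 𝔽^k`, `(1/(3c)^k)·d_S(B₁) ≤ d_S(B₂) ≤ 2^k·d_S(B₁)`. -/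
theorem statement14 (𝔽 : Subfield ℂ) (k : ℕ) (hk : 1 ≤ k) (c B₁ B₂ : ℝ)
    (hc : 1 ≤ c) (h0 : 0 ≤ B₁) (h12 : B₁ ≤ B₂) (h2 : B₂ ≤ c * B₁)
    (S : Set (Fin k → ↥𝔽)) :
    1 / (3 * c) ^ k * latDensity S B₁ ≤ latDensity S B₂ ∧
      latDensity S B₂ ≤ 2 ^ k * latDensity S B₁ := by
  have h0' : (0:ℝ) ≤ B₂ := le_trans h0 h12
  have hfa : (0:ℤ) ≤ ⌊B₁⌋ := Int.floor_nonneg.mpr h0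
  have hfb : (0:ℤ) ≤ ⌊B₂⌋ := Int.floor_nonneg.mpr h0'
  have hfab : ⌊B₁⌋ ≤ ⌊B₂⌋ := Int.floor_le_floor h12
  have hDa : (0:ℝ) < ((2 * ⌊B₁⌋ + 1 : ℤ) : ℝ) ^ k := denom_pos h0
  have hDb : (0:ℝ) < ((2 * ⌊B₂⌋ + 1 : ℤ) : ℝ) ^ k := denom_pos h0'
  have hDa1 : (0:ℝ) < ((2 * ⌊B₁⌋ + 1 : ℤ) : ℝ) := by
    have : (0:ℤ) < 2 * ⌊B₁⌋ + 1 := by omega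
    exact_mod_cast this
  have hDb1 : (0:ℝ) < ((2 * ⌊B₂⌋ + 1 : ℤ) : ℝ) := by
    have : (0:ℤ) < 2 * ⌊B₂⌋ + 1 := by omega
    exact_mod_cast this
  have hd1 : 0 ≤ latDensity S B₁ := latDensity_nonneg S h0
  have hd2 : 0 ≤ latDensity S B₂ := latDensity_nonneg S h0'
  constructor
  · -- lower bound
    have hDbDa : ((2 * ⌊B₂⌋ + 1 : ℤ) : ℝ) ≤ 3 * c * ((2 * ⌊B₁⌋ + 1 : ℤ) : ℝ) := by
      have hb1 : (⌊B₂⌋ : ℝ) ≤ B₂ := Int.floor_le _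
      have hb2 : B₂ ≤ c * B₁ := h2
      have hb3 : B₁ ≤ (⌊B₁⌋ : ℝ) + 1 := (Int.lt_floor_add_one _).le
      have ha0 : (0:ℝ) ≤ (⌊B₁⌋ : ℝ) := by exact_mod_cast hfa
      push_cast
      nlinarith
    have main : latDensity S B₁ ≤ (3 * c) ^ k * latDensity S B₂ := by
      apply ciSup_le
      intro φ
      have t1 : (latCount (φ '' S) B₁ : ℝ) ≤ (latCount (φ '' S) B₂ : ℝ) := by
        exact_mod_cast latCount_mono (subset_refl _) h12
      have t2 := le_latDensity S h0' φ
      have hN2 : (latCount (φ '' S) B₂ : ℝ) ≤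
          latDensity S B₂ * ((2 * ⌊B₂⌋ + 1 : ℤ) : ℝ) ^ k := (div_le_iff₀ hDb).mp t2
      have hpow : ((2 * ⌊B₂⌋ + 1 : ℤ) : ℝ) ^ k ≤
          (3 * c) ^ k * ((2 * ⌊B₁⌋ + 1 : ℤ) : ℝ) ^ k := by
        rw [← mul_pow]
        exact pow_le_pow_left₀ hDb1.le hDbDa k
      rw [div_le_iff₀ hDa]
      calc (latCount (φ '' S) B₁ : ℝ) ≤ latDensity S B₂ * ((2 * ⌊B₂⌋ + 1 : ℤ) : ℝ) ^ k :=
            le_trans t1 hN2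
        _ ≤ latDensity S B₂ * ((3 * c) ^ k * ((2 * ⌊B₁⌋ + 1 : ℤ) : ℝ) ^ k) :=
            mul_le_mul_of_nonneg_left hpow hd2
        _ = (3 * c) ^ k * latDensity S B₂ * ((2 * ⌊B₁⌋ + 1 : ℤ) : ℝ) ^ k := by ring
    have h3c : (0:ℝ) < (3 * c) ^ k := by positivity
    calc 1 / (3 * c) ^ k * latDensity S B₁
        ≤ 1 / (3 * c) ^ k * ((3 * c) ^ k * latDensity S B₂) := by
          apply mul_le_mul_of_nonneg_left main (by positivity)
      _ = latDensity S B₂ := by field_simp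
  · -- upper bound
    by_cases hfl : ⌊B₂⌋ = ⌊B₁⌋
    · have heq : latDensity S B₂ = latDensity S B₁ := by
        unfold latDensity
        apply iSup_congr
        intro φ
        rw [latCount_congr _ hfl, hfl]
      rw [heq]
      have h2k : (1:ℝ) ≤ 2 ^ k := one_le_pow₀ (by norm_num)
      nlinarith
    · by_cases ha1 : 1 ≤ ⌊B₁⌋
      · exact upper_main S h0 h12 ha1
      · have ha0 : ⌊B₁⌋ = 0 := by omega
        rcases Set.eq_empty_or_nonempty S with hS | ⟨s, hs⟩
        · have hzero : latDensity S B₂ = 0 := by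
            unfold latDensity
            have hterm : (fun φ : (Fin k → ↥𝔽) ≃ᵃ[↥𝔽] (Fin k → ↥𝔽) =>
                (latCount (φ '' S) B₂ : ℝ) / ((2 * ⌊B₂⌋ + 1 : ℤ) : ℝ) ^ k)
                = fun _ => (0:ℝ) := by
              funext φ
              rw [hS, Set.image_empty, latCount_empty]
              simp
            rw [hterm]
            exact ciSup_const
          rw [hzero]
          positivity
        · have hone : (1:ℝ) ≤ latDensity S B₁ := by
            set φ : (Fin k → ↥𝔽) ≃ᵃ[↥𝔽] (Fin k → ↥𝔽) :=
              AffineEquiv.constVAdd ↥𝔽 (Fin k → ↥𝔽) (-s) with hφ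
            have hmem : ((fun _ => 0 : Fin k → ℤ)) ∈
                {x : Fin k → ℤ | (fun i => ((x i : ℤ) : ↥𝔽)) ∈ φ '' S ∧
                  ∀ i, |(x i : ℝ)| ≤ B₁} := by
              constructor
              · refine ⟨s, hs, ?_⟩
                funext i
                simp [hφ]
              · intro i
                simpa using h0
            have hNpos : 1 ≤ latCount (φ '' S) B₁ := by
              unfold latCount
              haveI := (latSet_finite (φ '' S) B₁).to_subtype
              haveI := (Set.nonempty_of_mem hmem).to_subtype
              exact Nat.one_le_iff_ne_zero.mpr Nat.card_pos.ne'
            have hterm := le_latDensity S h0 φ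
            rw [ha0] at hterm
            norm_num at hterm
            calc (1:ℝ) ≤ (latCount (φ '' S) B₁ : ℝ) := by exact_mod_cast hNpos
              _ ≤ latDensity S B₁ := hterm
          have h2k : (1:ℝ) ≤ 2 ^ k := one_le_pow₀ (by norm_num)
          calc latDensity S B₂ ≤ 1 := latDensity_le_one S h0'
            _ ≤ 2 ^ k * latDensity S B₁ := by nlinarith
end

section
/- Let X and Y be independent random variables taking values in measurable spaces 𝒳 and 𝒴, let X' be an independent copy of X such that X, X', Y are mutually independent, and let E ⊆ 𝒳 × 𝒴 be a measurable set. Then P[(X,Y) ∈ E] ≤ ( P[(X,Y) ∈ E and (X',Y) ∈ E] )^{1/2}. -/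
open MeasureTheory ProbabilityTheory

/-- Lemma `decoupling-lemma`.
Let `X, Y` be independent random variables, let `X'` be an independent copy of `X`
(so that `X, X', Y` are mutually independent and `X'` has the same distribution as
`X`), and let `E` be a measurable set. Then
`P[(X,Y) ∈ E] ≤ (P[(X,Y) ∈ E ∧ (X',Y) ∈ E])^{1/2}`. -/
theorem statement16 {Ω 𝒳 𝒴 : Type*} [MeasurableSpace Ω] [MeasurableSpace 𝒳]
    [MeasurableSpace 𝒴] (μ : Measure Ω) [IsProbabilityMeasure μ]
    (X X' : Ω → 𝒳) (Y : Ω → 𝒴)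
    (hX : Measurable X) (hX' : Measurable X') (hY : Measurable Y)
    (hcopy : Measure.map X μ = Measure.map X' μ)
    (hXX' : IndepFun X X' μ)
    (hXY : IndepFun (fun ω => (X ω, X' ω)) Y μ)
    (E : Set (𝒳 × 𝒴)) (hE : MeasurableSet E) :
    μ {ω | (X ω, Y ω) ∈ E}
      ≤ (μ {ω | (X ω, Y ω) ∈ E ∧ (X' ω, Y ω) ∈ E}) ^ ((1 : ℝ) / 2) := by
  set κ := μ.map X with hκ
  set ν := μ.map Y with hν
  have hXXm : Measurable (fun ω => (X ω, X' ω)) := hX.prodMk hX'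
  -- joint law of ((X, X'), Y)
  have h1 : μ.map (fun ω => ((X ω, X' ω), Y ω))
      = (μ.map (fun ω => (X ω, X' ω))).prod ν :=
    (indepFun_iff_map_prod_eq_prod_map_map hXXm.aemeasurable hY.aemeasurable).mp hXY
  have h2 : μ.map (fun ω => (X ω, X' ω)) = κ.prod κ := by
    rw [(indepFun_iff_map_prod_eq_prod_map_map hX.aemeasurable hX'.aemeasurable).mp hXX',
      ← hcopy]
  -- IndepFun X Y
  have hXYind : IndepFun X Y μ := hXY.comp measurable_fst measurable_id
  have h3 : μ.map (fun ω => (X ω, Y ω)) = κ.prod ν :=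
    (indepFun_iff_map_prod_eq_prod_map_map hX.aemeasurable hY.aemeasurable).mp hXYind
  -- slice function
  set f : 𝒴 → ENNReal := fun y => κ {x | (x, y) ∈ E} with hf
  have hfm : Measurable f := measurable_measure_prodMk_right hE
  -- compute LHS
  have hL : μ {ω | (X ω, Y ω) ∈ E} = ∫⁻ y, f y ∂ν := by
    have : μ {ω | (X ω, Y ω) ∈ E} = (κ.prod ν) E := by
      rw [← h3, Measure.map_apply (hX.prodMk hY) hE]; rfl
    rw [this, Measure.prod_apply_symm hE]; rfl
  -- the set for the RHS
  set S : Set ((𝒳 × 𝒳) × 𝒴) := {p | (p.1.1, p.2) ∈ E ∧ (p.1.2, p.2) ∈ E} with hS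
  have hSm : MeasurableSet S := by
    apply MeasurableSet.inter
    · exact (measurable_fst.fst.prodMk measurable_snd) hE
    · exact (measurable_fst.snd.prodMk measurable_snd) hE
  have hR : μ {ω | (X ω, Y ω) ∈ E ∧ (X' ω, Y ω) ∈ E} = ∫⁻ y, f y * f y ∂ν := by
    have hpre : {ω | (X ω, Y ω) ∈ E ∧ (X' ω, Y ω) ∈ E}
        = (fun ω => ((X ω, X' ω), Y ω)) ⁻¹' S := rfl
    rw [hpre, ← Measure.map_apply (hXXm.prodMk hY) hSm, h1, h2,
      Measure.prod_apply_symm hSm]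
    refine lintegral_congr fun y => ?_
    have : (fun q : 𝒳 × 𝒳 => (q, y)) ⁻¹' S
        = {x | (x, y) ∈ E} ×ˢ {x | (x, y) ∈ E} := by
      ext ⟨a, b⟩; simp [S, Set.mem_prod]
    rw [this, Measure.prod_prod]
  rw [hL, hR]
  haveI : IsProbabilityMeasure ν := Measure.isProbabilityMeasure_map hY.aemeasurable
  -- Hölder with p = q = 2, g = 1
  have hcs := ENNReal.lintegral_mul_le_Lp_mul_Lq ν
    (Real.HolderConjugate.two_two : (2:ℝ).HolderConjugate 2) hfm.aemeasurable (aemeasurable_const (b := (1:ENNReal)))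
  simp only [mul_one, Pi.mul_apply, ENNReal.one_rpow, lintegral_const, measure_univ,
    one_mul, mul_one] at hcs
  calc ∫⁻ y, f y ∂ν ≤ (∫⁻ y, f y ^ (2:ℝ) ∂ν) ^ ((1:ℝ)/2) := by
        simpa using hcs
    _ = (∫⁻ y, f y * f y ∂ν) ^ ((1:ℝ)/2) := by
        congr 1
        refine lintegral_congr fun y => ?_
        rw [show ((2:ℝ)) = ((2:ℕ):ℝ) by norm_num, ENNReal.rpow_natCast, sq]
end
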